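/- arXiv:2102.06384 — 10 statements merged into one kernel-verified Lean document; each statement's English description precedes it below -/
import Mathlib

section
/- Suppose p + q < 1, and let g be a real number with g ≤ H(ω*). Then the function f(ω) = (H(τ(ω)) − g)/(ω − τ(ω)) is antitone (nonincreasing) on the interval (0, ω*). (Note that ω − τ(ω) = ω(p+q) − p < 0 for ω ∈ (0, ω*), so f is well defined there.) -/
/-- The one-step belief update map τ(ω) = p + ω(1 − p − q). -/
noncomputable def tau (p q ω : ℝ) : ℝ := p + ω * (1 - p - q)

/-- The equilibrium belief state ω* = p/(p+q). -/
noncomputable def wstar (p q : ℝ) : ℝ := p / (p + q)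

/-- The binary entropy function H(x) = −x·log₂ x − (1−x)·log₂(1−x). -/
noncomputable def binEnt (x : ℝ) : ℝ := -x * Real.logb 2 x - (1 - x) * Real.logb 2 (1 - x)

lemma binEnt_eq (x : ℝ) : binEnt x = (Real.log 2)⁻¹ * Real.binEntropy x := by
  unfold binEnt Real.binEntropy Real.logb
  rw [Real.log_inv, Real.log_inv]
  field_simp
  ring

lemma binEnt_concave : ConcaveOn ℝ (Set.Icc (0:ℝ) 1) binEnt := by
  have h := (Real.strictConcave_binEntropy.concaveOn).smul
    (c := (Real.log 2)⁻¹) (inv_nonneg.2 (Real.log_nonneg one_le_two))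
  have e : binEnt = fun x => (Real.log 2)⁻¹ • Real.binEntropy x := by
    funext x
    simp [binEnt_eq, smul_eq_mul]
  rw [e]; exact h

/-- Suppose p + q < 1 and g ≤ H(ω*). Then
f(ω) = (H(τ(ω)) − g)/(ω − τ(ω)) is antitone (nonincreasing) on (0, ω*). -/
theorem f_antitone_monotonic_case (p q : ℝ) (hp : 0 < p) (hpq : p ≤ q) (hq : q < 1)
    (hsum : p + q < 1) (g : ℝ) (hg : g ≤ binEnt (wstar p q)) :
    AntitoneOn (fun ω => (binEnt (tau p q ω) - g) / (ω - tau p q ω))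
      (Set.Ioo (0 : ℝ) (wstar p q)) := by
  set s : ℝ := p + q with hs_def
  have hs0 : 0 < s := by rw [hs_def]; linarith
  set w : ℝ := wstar p q with hw_def
  have hw0 : 0 < w := div_pos hp hs0
  have hw1 : w < 1 := by
    rw [hw_def, wstar, div_lt_one hs0]; linarith
  -- tau fixes w
  have htw : tau p q w = w := by
    simp only [hw_def, tau, wstar]
    have hpq0 : p + q ≠ 0 := hs0.ne'
    field_simp
    ring
  -- tau as s * (ω - w)
  have hd : ∀ ω : ℝ, ω - tau p q ω = s * (ω - w) := by
    intro ω
    simp only [hw_def, hs_def, tau, wstar]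
    have hpq0 : p + q ≠ 0 := hs0.ne'
    field_simp
    ring
  -- F := binEnt ∘ tau is concave on Icc 0 w
  set F : ℝ → ℝ := fun ω => binEnt (tau p q ω) with hF_def
  have htau_mem : ∀ a ∈ Set.Icc (0:ℝ) w, tau p q a ∈ Set.Icc (0:ℝ) 1 := by
    rintro a ⟨ha0, haw⟩
    constructor
    · unfold tau; nlinarith
    · have : tau p q a ≤ tau p q w := by unfold tau; nlinarith
      rw [htw] at this; linarith
  have hF : ConcaveOn ℝ (Set.Icc (0:ℝ) w) F := by
    refine ⟨convex_Icc _ _, ?_⟩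
    intro a ha b hb μ ν hμ hν hμν
    have hlin : tau p q (μ • a + ν • b) = μ • tau p q a + ν • tau p q b := by
      simp only [smul_eq_mul, tau]
      linear_combination p * hμν.symm
    rw [hF_def]
    simp only
    rw [hlin]
    exact binEnt_concave.2 (htau_mem a ha) (htau_mem b hb) hμ hν hμν
  have hslope := hF.slope_anti (x := w) (Set.right_mem_Icc.2 hw0.le)
  -- main proof
  intro x hx y hy hxy
  obtain ⟨hx0, hxw⟩ := hx
  obtain ⟨hy0, hyw⟩ := hy
  have hxw' : x - w < 0 := by linarith
  have hyw' : y - w < 0 := by linarith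
  have hxne : x ≠ w := ne_of_lt hxw
  have hyne : y ≠ w := ne_of_lt hyw
  have hc : 0 ≤ F w - g := by
    rw [hF_def]; simp only [htw]; linarith
  set c : ℝ := F w - g with hc_def
  -- Fact A: slopes
  have hA : (F y - F w) / (y - w) ≤ (F x - F w) / (x - w) := by
    have hxmem : x ∈ Set.Icc (0:ℝ) w \ {w} := ⟨⟨hx0.le, hxw.le⟩, hxne⟩
    have hymem : y ∈ Set.Icc (0:ℝ) w \ {w} := ⟨⟨hy0.le, hyw.le⟩, hyne⟩
    have := hslope hxmem hymem hxy
    simpa [slope_def_field, div_eq_div_iff] using this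
  -- Fact B: c/(y-w) ≤ c/(x-w)
  have hB : c / (y - w) ≤ c / (x - w) := by
    have hprod : 0 < (x - w) * (y - w) := mul_pos_of_neg_of_neg hxw' hyw'
    have hx' : x - w ≠ 0 := hxw'.ne
    have hy' : y - w ≠ 0 := hyw'.ne
    have key : 0 ≤ c / (x - w) - c / (y - w) := by
      have heq : c / (x - w) - c / (y - w) = c * (y - x) / ((x - w) * (y - w)) := by
        field_simp
        ring
      rw [heq]
      exact div_nonneg (mul_nonneg hc (by linarith)) hprod.le
    linarith
  -- rewrite f
  have hrw : ∀ z : ℝ, z ≠ w →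
      (binEnt (tau p q z) - g) / (z - tau p q z)
        = ((F z - F w) / (z - w) + c / (z - w)) / s := by
    intro z hz
    rw [hd z, ← add_div]
    have h1 : F z - F w + c = binEnt (tau p q z) - g := by
      simp only [hc_def, hF_def]; ring
    rw [h1, div_div, mul_comm]
  simp only
  rw [hrw x hxne, hrw y hyne]
  gcongr
end

section
/- Suppose p + q < 1 and let ω, ω^l, ω^u be reals with 0 < ω ≤ ω^l < ω* ≤ ω^u ≤ 1. Then the set { k ∈ ℕ : τ^k(ω) ∈ (ω^l, ω^u) } is nonempty and its least element equals ⌊ log_{1−p−q}( (ω^l − ω*)/(ω − ω*) ) ⌋ + 1. -/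
/-- Suppose p + q < 1 and 0 < ω ≤ ω^l < ω* ≤ ω^u ≤ 1. Then the set
{ k ∈ ℕ : τ^k(ω) ∈ (ω^l, ω^u) } is nonempty and its least element equals
⌊ log_{1−p−q}( (ω^l − ω*)/(ω − ω*) ) ⌋ + 1. -/
theorem hitting_time_below_monotonic (p q : ℝ) (hp : 0 < p) (hpq : p ≤ q) (hq : q < 1)
    (hsum : p + q < 1) (ω ωl ωu : ℝ) (h0 : 0 < ω) (h1 : ω ≤ ωl)
    (h2 : ωl < wstar p q) (h3 : wstar p q ≤ ωu) (h4 : ωu ≤ 1) :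
    {k : ℕ | (tau p q)^[k] ω ∈ Set.Ioo ωl ωu}.Nonempty ∧
    ((sInf {k : ℕ | (tau p q)^[k] ω ∈ Set.Ioo ωl ωu} : ℕ) : ℤ) =
      ⌊Real.logb (1 - p - q) ((ωl - wstar p q) / (ω - wstar p q))⌋ + 1 := by
  set r : ℝ := 1 - p - q with hr
  have hq0 : 0 < q := lt_of_lt_of_le hp hpq
  have hpq0 : 0 < p + q := by linarith
  have hr0 : 0 < r := by simp [hr]; linarith
  have hr1 : r < 1 := by simp [hr]; linarith
  have hws : wstar p q = p / (p + q) := rfl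
  have hfix : p + wstar p q * r = wstar p q := by
    rw [hws, hr]; field_simp; ring
  have hit : ∀ k : ℕ, (tau p q)^[k] ω = wstar p q + r ^ k * (ω - wstar p q) := by
    intro k
    induction k with
    | zero => simp
    | succ k ih =>
      rw [Function.iterate_succ_apply', ih, tau]
      have : p + (wstar p q + r ^ k * (ω - wstar p q)) * r
          = (p + wstar p q * r) + r ^ (k + 1) * (ω - wstar p q) := by ring
      rw [hr] at this ⊢
      rw [this, hfix]
  have hωs : ω - wstar p q < 0 := by linarith
  set c : ℝ := (ωl - wstar p q) / (ω - wstar p q) with hc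
  have hc0 : 0 < c := div_pos_of_neg_of_neg (by linarith) hωs
  have hc1 : c ≤ 1 := by
    rw [hc, div_le_one_of_neg hωs]
    linarith
  set L : ℝ := Real.logb r c with hL
  have hL0 : 0 ≤ L := by
    rw [hL, Real.logb, div_nonneg_iff]
    right
    constructor
    · exact Real.log_nonpos (le_of_lt hc0) hc1
    · exact le_of_lt (Real.log_neg hr0 hr1)
  have hrL : r ^ L = c := Real.rpow_logb hr0 (ne_of_lt hr1) hc0
  have hmem : ∀ k : ℕ, ((tau p q)^[k] ω ∈ Set.Ioo ωl ωu) ↔ L < (k : ℝ) := by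
    intro k
    rw [hit k, Set.mem_Ioo]
    constructor
    · rintro ⟨hl, _⟩
      -- r^k * (ω - ω*) > ωl - ω*  ⇒ r^k < c
      have hrk : (r : ℝ) ^ (k : ℝ) < c := by
        rw [Real.rpow_natCast]
        rw [hc, lt_div_iff_of_neg hωs]
        nlinarith
      rw [← hrL] at hrk
      exact (Real.rpow_lt_rpow_left_iff_of_base_lt_one hr0 hr1).mp hrk
    · intro hk
      have hrk : (r : ℝ) ^ (k : ℝ) < c := by
        rw [← hrL]
        exact (Real.rpow_lt_rpow_left_iff_of_base_lt_one hr0 hr1).mpr hk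
      rw [Real.rpow_natCast] at hrk
      have hrkpos : (0:ℝ) < r ^ k := pow_pos hr0 k
      constructor
      · rw [hc, lt_div_iff_of_neg hωs] at hrk
        nlinarith
      · nlinarith
  set n : ℕ := ⌊L⌋.toNat with hn
  have hnL : (n : ℝ) = ⌊L⌋ := by
    rw [hn]; exact_mod_cast Int.toNat_of_nonneg (Int.floor_nonneg.mpr hL0)
  have hmem1 : (n + 1) ∈ {k : ℕ | (tau p q)^[k] ω ∈ Set.Ioo ωl ωu} := by
    rw [Set.mem_setOf_eq, hmem]
    push_cast [hnL]
    have := Int.lt_floor_add_one L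
    push_cast at this ⊢
    linarith
  refine ⟨⟨n + 1, hmem1⟩, ?_⟩
  have hinf : sInf {k : ℕ | (tau p q)^[k] ω ∈ Set.Ioo ωl ωu} = n + 1 := by
    apply le_antisymm (Nat.sInf_le hmem1)
    apply Nat.le_of_not_lt
    intro hlt
    have hm := Nat.sInf_mem (⟨n + 1, hmem1⟩ : Set.Nonempty _)
    rw [Set.mem_setOf_eq, hmem] at hm
    have hle : sInf {k : ℕ | (tau p q)^[k] ω ∈ Set.Ioo ωl ωu} ≤ n := Nat.lt_succ_iff.mp hlt
    have : ((sInf {k : ℕ | (tau p q)^[k] ω ∈ Set.Ioo ωl ωu} : ℕ) : ℝ) ≤ (n : ℝ) := by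
      exact_mod_cast hle
    have hfl : (n : ℝ) ≤ L := by rw [hnL]; exact Int.floor_le L
    linarith
  rw [hinf]
  push_cast
  rw [show ((n : ℤ)) = ⌊L⌋ from by exact_mod_cast Int.toNat_of_nonneg (Int.floor_nonneg.mpr hL0)]
end

section
/- Suppose p + q < 1 and let ω, ω^l, ω^u be reals with 0 ≤ ω^l < ω^u ≤ ω ≤ 1 and ω^u > ω*. Set k₀ = ⌊ log_{1−p−q}( (ω^u − ω*)/(ω − ω*) ) ⌋ + 1. If τ^{k₀}(ω) > ω^l, then the set { k ∈ ℕ : τ^k(ω) ∈ (ω^l, ω^u) } is nonempty and its least element equals k₀. -/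
lemma tau_iter_eq (p q ω : ℝ) (hpq : 0 < p + q) (k : ℕ) :
    (tau p q)^[k] ω = wstar p q + (ω - wstar p q) * (1 - p - q)^k := by
  induction k with
  | zero => simp
  | succ n ih =>
    rw [Function.iterate_succ_apply', ih, tau]
    have hws : wstar p q * (p + q) = p := by
      rw [wstar, div_mul_cancel₀ p hpq.ne']
    ring_nf
    ring_nf at hws
    nlinarith [hws]

/-- Suppose p + q < 1 and 0 ≤ ω^l < ω^u ≤ ω ≤ 1 with ω^u > ω*. Set
k₀ = ⌊ log_{1−p−q}( (ω^u − ω*)/(ω − ω*) ) ⌋ + 1. If τ^{k₀}(ω) > ω^l, then the set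
{ k ∈ ℕ : τ^k(ω) ∈ (ω^l, ω^u) } is nonempty and its least element equals k₀. -/
theorem hitting_time_above_monotonic (p q : ℝ) (hp : 0 < p) (hpq : p ≤ q) (hq : q < 1)
    (hsum : p + q < 1) (ω ωl ωu : ℝ) (h1 : 0 ≤ ωl) (h2 : ωl < ωu) (h3 : ωu ≤ ω)
    (h4 : ω ≤ 1) (h5 : wstar p q < ωu) (k₀ : ℕ)
    (hk₀ : (k₀ : ℤ) = ⌊Real.logb (1 - p - q) ((ωu - wstar p q) / (ω - wstar p q))⌋ + 1)
    (hgt : ωl < (tau p q)^[k₀] ω) :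
    {k : ℕ | (tau p q)^[k] ω ∈ Set.Ioo ωl ωu}.Nonempty ∧
    sInf {k : ℕ | (tau p q)^[k] ω ∈ Set.Ioo ωl ωu} = k₀ := by
  set r := 1 - p - q with hr
  set w := wstar p q with hw
  have hpq0 : 0 < p + q := by linarith
  have hr0 : 0 < r := by simp [hr]; linarith
  have hr1 : r < 1 := by simp [hr]; linarith
  have hd : 0 < ω - w := by linarith
  have hu : 0 < ωu - w := by linarith
  set t := (ωu - w) / (ω - w) with ht
  have ht0 : 0 < t := div_pos hu hd
  have ht1 : t ≤ 1 := by
    rw [ht, div_le_one hd]; linarith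
  set L := Real.logb r t with hL
  have hlogr : Real.log r < 0 := Real.log_neg hr0 hr1
  have hLdef : L = Real.log t / Real.log r := rfl
  have hL0 : 0 ≤ L := by
    rw [hLdef]
    exact div_nonneg_of_nonpos (Real.log_nonpos (le_of_lt ht0) ht1) hlogr.le
  -- characterization of τ^k ω < ωu
  have key : ∀ k : ℕ, (tau p q)^[k] ω < ωu ↔ L < (k : ℝ) := by
    intro k
    rw [tau_iter_eq p q ω hpq0 k, ← hw, ← hr]
    have h1' : w + (ω - w) * r ^ k < ωu ↔ r ^ k < t := by
      rw [ht, lt_div_iff₀ hd]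
      constructor <;> intro h <;> nlinarith
    have h2' : r ^ k < t ↔ L < (k : ℝ) := by
      rw [← Real.log_lt_log_iff (pow_pos hr0 k) ht0, Real.log_pow, hLdef,
        div_lt_iff_of_neg hlogr]
    rw [h1', h2']
  have hLk : L < (k₀ : ℝ) := by
    have := Int.lt_floor_add_one L
    calc L < (⌊L⌋ : ℝ) + 1 := this
      _ = ((⌊L⌋ + 1 : ℤ) : ℝ) := by push_cast; ring
      _ = (k₀ : ℝ) := by rw [← hk₀]; push_cast; ring
  have hmem : k₀ ∈ {k : ℕ | (tau p q)^[k] ω ∈ Set.Ioo ωl ωu} := by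
    exact ⟨hgt, (key k₀).2 hLk⟩
  have hmin : ∀ m ∈ {k : ℕ | (tau p q)^[k] ω ∈ Set.Ioo ωl ωu}, k₀ ≤ m := by
    intro m hm
    by_contra hlt
    push_neg at hlt
    have hmk : (m : ℤ) ≤ ⌊L⌋ := by
      have : (m : ℤ) < k₀ := by exact_mod_cast hlt
      omega
    have : (m : ℝ) ≤ L := by
      calc (m : ℝ) = ((m : ℤ) : ℝ) := by push_cast; ring
        _ ≤ (⌊L⌋ : ℝ) := by exact_mod_cast hmk
        _ ≤ L := Int.floor_le L
    have := (key m).1 hm.2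
    linarith
  exact ⟨⟨k₀, hmem⟩, le_antisymm (Nat.sInf_le hmem) (le_csInf ⟨k₀, hmem⟩ hmin)⟩
end

section
/- Suppose p + q < 1 and let ω^l, ω^u be reals with 0 ≤ ω^l < ω^u ≤ 1. (a) If ω ∈ (0,1) satisfies ω ≤ ω^l and ω* ≤ ω^l, then τ^k(ω) ∉ (ω^l, ω^u) for every k ∈ ℕ. (b) If ω ∈ (0,1] satisfies ω ≥ ω^u > ω^l > ω* and τ^{k₀}(ω) ≤ ω^l, where k₀ = ⌊ log_{1−p−q}( (ω^u − ω*)/(ω − ω*) ) ⌋ + 1, then τ^k(ω) ∉ (ω^l, ω^u) for every k ∈ ℕ. -/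
lemma tau_iter_closed (p q ω : ℝ) (hpq : p + q ≠ 0) (k : ℕ) :
    (tau p q)^[k] ω = wstar p q + (1 - p - q) ^ k * (ω - wstar p q) := by
  induction k with
  | zero => simp
  | succ k ih =>
    rw [Function.iterate_succ_apply', ih, tau, wstar]
    field_simp
    ring

/-- Suppose p + q < 1 and 0 ≤ ω^l < ω^u ≤ 1.
(a) If ω ∈ (0,1) satisfies ω ≤ ω^l and ω* ≤ ω^l, then τ^k(ω) ∉ (ω^l, ω^u) for all k.
(b) If ω ∈ (0,1] satisfies ω ≥ ω^u > ω^l > ω* and τ^{k₀}(ω) ≤ ω^l, where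
k₀ = ⌊ log_{1−p−q}( (ω^u − ω*)/(ω − ω*) ) ⌋ + 1, then τ^k(ω) ∉ (ω^l, ω^u) for all k. -/
theorem hitting_time_infinite_monotonic (p q : ℝ) (hp : 0 < p) (hpq : p ≤ q) (hq : q < 1)
    (hsum : p + q < 1) (ωl ωu : ℝ) (h1 : 0 ≤ ωl) (h2 : ωl < ωu) (h3 : ωu ≤ 1) :
    (∀ ω ∈ Set.Ioo (0 : ℝ) 1, ω ≤ ωl → wstar p q ≤ ωl →
      ∀ k : ℕ, (tau p q)^[k] ω ∉ Set.Ioo ωl ωu) ∧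
    (∀ ω ∈ Set.Ioc (0 : ℝ) 1, ωu ≤ ω → wstar p q < ωl →
      ∀ k₀ : ℕ,
        (k₀ : ℤ) = ⌊Real.logb (1 - p - q) ((ωu - wstar p q) / (ω - wstar p q))⌋ + 1 →
        (tau p q)^[k₀] ω ≤ ωl →
        ∀ k : ℕ, (tau p q)^[k] ω ∉ Set.Ioo ωl ωu) := by
  have hpq0 : (0:ℝ) < p + q := by linarith
  have hpqne : p + q ≠ 0 := ne_of_gt hpq0
  have hr0 : (0:ℝ) < 1 - p - q := by linarith
  have hr1 : 1 - p - q < 1 := by linarith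
  constructor
  · intro ω hω hωl hwl k
    rw [tau_iter_closed p q ω hpqne k]
    have hk1 : (1 - p - q) ^ k ≤ 1 := pow_le_one₀ hr0.le hr1.le
    have hk0 : (0:ℝ) ≤ (1 - p - q) ^ k := pow_nonneg hr0.le k
    rintro ⟨ha, hb⟩
    rcases le_or_gt (wstar p q) ω with h | h
    · nlinarith
    · nlinarith
  · intro ω hω hωu hwl k₀ hk₀ hk₀le k
    set w := wstar p q with hw
    have hdpos : 0 < ω - w := by linarith
    rw [tau_iter_closed p q ω hpqne k]
    rcases lt_or_ge k k₀ with hk | hk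
    · -- show the iterate is still ≥ ωu
      have hratio_pos : 0 < (ωu - w) / (ω - w) := div_pos (by linarith) hdpos
      have hkL : (k : ℝ) ≤ Real.logb (1 - p - q) ((ωu - w) / (ω - w)) := by
        rw [show ((k:ℝ) = ((k:ℤ) : ℝ)) by push_cast; ring]
        refine Int.le_floor.mp ?_
        omega
      have h1' : (1 - p - q) ^ (Real.logb (1 - p - q) ((ωu - w) / (ω - w)) : ℝ)
          ≤ (1 - p - q) ^ ((k:ℝ)) :=
        Real.rpow_le_rpow_of_exponent_ge hr0 hr1.le hkL
      rw [Real.rpow_logb hr0 (by linarith) hratio_pos, Real.rpow_natCast] at h1'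
      have : (ωu - w) ≤ (1 - p - q) ^ k * (ω - w) := by
        rw [div_le_iff₀ hdpos] at h1'
        linarith
      rintro ⟨ha, hb⟩
      linarith
    · -- iterate ≤ ωl
      have hpow : (1 - p - q) ^ k ≤ (1 - p - q) ^ k₀ :=
        pow_le_pow_of_le_one hr0.le hr1.le hk
      have h2' : w + (1 - p - q) ^ k * (ω - w) ≤ w + (1 - p - q) ^ k₀ * (ω - w) := by
        nlinarith
      rw [tau_iter_closed p q ω hpqne k₀] at hk₀le
      rintro ⟨ha, hb⟩
      linarith
end

section
/- Suppose p + q > 1 and let ω, ω^l, ω^u be reals with 0 ≤ ω^l < ω* < ω^u ≤ ω ≤ 1. Then the set { n ∈ ℕ : τ^{2n}(ω) ∈ (ω^l, ω^u) } is nonempty and its least element equals ⌊ (1/2)·log_{p+q−1}( (ω^u − ω*)/(ω − ω*) ) ⌋ + 1. -/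
lemma tau_iter_formula (p q : ℝ) (hpq : p + q ≠ 0) (ω : ℝ) (k : ℕ) :
    (tau p q)^[k] ω = wstar p q + (1 - p - q) ^ k * (ω - wstar p q) := by
  induction k with
  | zero => simp
  | succ k ih =>
    rw [Function.iterate_succ_apply', ih, tau, wstar, pow_succ]
    field_simp
    ring

/-- Suppose p + q > 1 and 0 ≤ ω^l < ω* < ω^u ≤ ω ≤ 1. Then the set
{ n ∈ ℕ : τ^{2n}(ω) ∈ (ω^l, ω^u) } is nonempty and its least element equals
⌊ (1/2)·log_{p+q−1}( (ω^u − ω*)/(ω − ω*) ) ⌋ + 1. -/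
theorem hitting_time_even_oscillating (p q : ℝ) (hp : 0 < p) (hpq : p ≤ q) (hq : q < 1)
    (hsum : 1 < p + q) (ω ωl ωu : ℝ) (h1 : 0 ≤ ωl) (h2 : ωl < wstar p q)
    (h3 : wstar p q < ωu) (h4 : ωu ≤ ω) (h5 : ω ≤ 1) :
    {n : ℕ | (tau p q)^[2 * n] ω ∈ Set.Ioo ωl ωu}.Nonempty ∧
    ((sInf {n : ℕ | (tau p q)^[2 * n] ω ∈ Set.Ioo ωl ωu} : ℕ) : ℤ) =
      ⌊(1 / 2 : ℝ) * Real.logb (p + q - 1) ((ωu - wstar p q) / (ω - wstar p q))⌋ + 1 := by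
  have hpq0 : p + q ≠ 0 := by positivity
  set s := p + q - 1 with hs
  have hs0 : 0 < s := by simp [hs]; linarith
  have hs1 : s < 1 := by simp [hs]; linarith
  have hωgt : wstar p q < ω := lt_of_lt_of_le h3 h4
  set c := (ωu - wstar p q) / (ω - wstar p q) with hc
  have hcpos : 0 < c := div_pos (by linarith) (by linarith)
  have hcle1 : c ≤ 1 := by
    rw [hc, div_le_one (by linarith)]; linarith
  set L := (1 / 2 : ℝ) * Real.logb s c with hL
  have hls : Real.log s < 0 := Real.log_neg hs0 hs1
  have hL0 : 0 ≤ L := by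
    have hlc : Real.log c ≤ 0 := Real.log_nonpos (le_of_lt hcpos) hcle1
    have : 0 ≤ Real.logb s c := by
      rw [Real.logb]
      exact div_nonneg_of_nonpos hlc hls.le
    rw [hL]; linarith
  have key : ∀ n : ℕ, ((tau p q)^[2 * n] ω ∈ Set.Ioo ωl ωu) ↔ L < n := by
    intro n
    rw [Set.mem_Ioo, tau_iter_formula p q hpq0 ω]
    have hpow : (1 - p - q) ^ (2 * n) = s ^ (2 * n) := by
      have h : (1 - p - q) = -s := by rw [hs]; ring
      rw [h, Even.neg_pow (even_two_mul n)]
    rw [hpow]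
    have hspow : 0 < s ^ (2 * n) := pow_pos hs0 _
    have upper : wstar p q + s ^ (2 * n) * (ω - wstar p q) < ωu ↔ L < n := by
      have step1 : wstar p q + s ^ (2 * n) * (ω - wstar p q) < ωu ↔ s ^ (2 * n) < c := by
        rw [hc, lt_div_iff₀ (by linarith)]
        constructor <;> intro h <;> nlinarith
      rw [step1]
      have step2 : s ^ (2 * n) < c ↔ ((2 * n : ℕ) : ℝ) * Real.log s < Real.log c := by
        rw [← Real.log_pow]
        exact (Real.log_lt_log_iff hspow hcpos).symm
      rw [step2]
      have step3 : ((2 * n : ℕ) : ℝ) * Real.log s < Real.log c ↔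
          Real.logb s c < 2 * (n : ℝ) := by
        rw [Real.logb, div_lt_iff_of_neg hls]
        push_cast
        constructor <;> intro h <;> nlinarith
      rw [step3, hL]
      constructor <;> intro h <;> nlinarith
    constructor
    · rintro ⟨_, h⟩; exact upper.mp h
    · intro h
      refine ⟨?_, upper.mpr h⟩
      nlinarith
  have hfl0 : 0 ≤ ⌊L⌋ := Int.floor_nonneg.mpr hL0
  have hSexp : {n : ℕ | (tau p q)^[2 * n] ω ∈ Set.Ioo ωl ωu} = Set.Ici (⌊L⌋ + 1).toNat := by
    ext n
    rw [Set.mem_setOf_eq, key n, Set.mem_Ici]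
    rw [show L < (n : ℝ) ↔ ⌊L⌋ < (n : ℤ) from (Int.floor_lt.trans (by push_cast; tauto)).symm]
    rw [Int.lt_iff_add_one_le, ← Int.toNat_le]
  constructor
  · rw [hSexp]; exact Set.nonempty_Ici
  · rw [hSexp, csInf_Ici]
    rw [Int.toNat_of_nonneg (by linarith)]
end

section
/- Suppose p + q > 1 and let ω, ω^l, ω^u be reals with ω* < ω^l < ω^u ≤ ω ≤ 1. Set k₁ = 2·⌊ (1/2)·log_{p+q−1}( (ω^u − ω*)/(ω − ω*) ) ⌋ + 2. If k₁ ≤ 2·⌈ (1/2)·log_{p+q−1}( (ω^l − ω*)/(ω − ω*) ) ⌉ − 2, then the set { k ∈ ℕ : τ^k(ω) ∈ (ω^l, ω^u) } is nonempty and its least element equals k₁. -/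
/-- Suppose p + q > 1 and ω* < ω^l < ω^u ≤ ω ≤ 1. Set
k₁ = 2·⌊ (1/2)·log_{p+q−1}( (ω^u − ω*)/(ω − ω*) ) ⌋ + 2. If
k₁ ≤ 2·⌈ (1/2)·log_{p+q−1}( (ω^l − ω*)/(ω − ω*) ) ⌉ − 2, then the set
{ k ∈ ℕ : τ^k(ω) ∈ (ω^l, ω^u) } is nonempty and its least element equals k₁. -/
theorem hitting_time_above_oscillating (p q : ℝ) (hp : 0 < p) (hpq : p ≤ q) (hq : q < 1)
    (hsum : 1 < p + q) (ω ωl ωu : ℝ) (h1 : wstar p q < ωl) (h2 : ωl < ωu)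
    (h3 : ωu ≤ ω) (h4 : ω ≤ 1) (k₁ : ℕ)
    (hk₁ : (k₁ : ℤ) =
      2 * ⌊(1 / 2 : ℝ) * Real.logb (p + q - 1) ((ωu - wstar p q) / (ω - wstar p q))⌋ + 2)
    (hle : (k₁ : ℤ) ≤
      2 * ⌈(1 / 2 : ℝ) * Real.logb (p + q - 1) ((ωl - wstar p q) / (ω - wstar p q))⌉ - 2) :
    {k : ℕ | (tau p q)^[k] ω ∈ Set.Ioo ωl ωu}.Nonempty ∧
    sInf {k : ℕ | (tau p q)^[k] ω ∈ Set.Ioo ωl ωu} = k₁ := by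
  have hpq0 : (0:ℝ) < p + q := by linarith
  set w := wstar p q with hw_def
  set b := p + q - 1 with hb_def
  have hb0 : 0 < b := by rw [hb_def]; linarith
  have hb1 : b < 1 := by rw [hb_def]; linarith
  have hbne : b ≠ 1 := ne_of_lt hb1
  have hwfix : p + w * (1 - p - q) = w := by
    rw [hw_def, wstar]; field_simp; ring
  have hd : 0 < ω - w := by linarith
  -- iteration formula
  have hiter : ∀ k : ℕ, (tau p q)^[k] ω = w + (-b)^k * (ω - w) := by
    intro k
    induction k with
    | zero => simp
    | succ n ih =>
      rw [Function.iterate_succ_apply', ih, tau, pow_succ]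
      have hb' : (1 : ℝ) - p - q = -b := by rw [hb_def]; ring
      rw [hb'] at hwfix ⊢
      linear_combination hwfix
  -- key comparisons via logb
  have key : ∀ (n : ℕ) (x : ℝ), 0 < x → (b ^ n < x ↔ Real.logb b x < n) := by
    intro n x hx
    have e1 : b ^ (Real.logb b x : ℝ) = x := Real.rpow_logb hb0 hbne hx
    rw [← Real.rpow_natCast b n]
    constructor
    · intro h
      rw [← e1] at h
      exact (Real.rpow_lt_rpow_left_iff_of_base_lt_one hb0 hb1).mp h
    · intro h
      rw [← e1]
      exact (Real.rpow_lt_rpow_left_iff_of_base_lt_one hb0 hb1).mpr h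
  have key' : ∀ (n : ℕ) (x : ℝ), 0 < x → (x < b ^ n ↔ (n : ℝ) < Real.logb b x) := by
    intro n x hx
    have e1 : b ^ (Real.logb b x : ℝ) = x := Real.rpow_logb hb0 hbne hx
    rw [← Real.rpow_natCast b n]
    constructor
    · intro h
      rw [← e1] at h
      exact (Real.rpow_lt_rpow_left_iff_of_base_lt_one hb0 hb1).mp h
    · intro h
      rw [← e1]
      exact (Real.rpow_lt_rpow_left_iff_of_base_lt_one hb0 hb1).mpr h
  set xu := (1 / 2 : ℝ) * Real.logb b ((ωu - w) / (ω - w)) with hxu_def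
  set xl := (1 / 2 : ℝ) * Real.logb b ((ωl - w) / (ω - w)) with hxl_def
  have hρu : 0 < (ωu - w) / (ω - w) := div_pos (by linarith) hd
  have hρl : 0 < (ωl - w) / (ω - w) := div_pos (by linarith) hd
  -- membership characterization
  have hmem_iff : ∀ k : ℕ, (tau p q)^[k] ω ∈ Set.Ioo ωl ωu ↔
      Even k ∧ (ωl - w) / (ω - w) < b ^ k ∧ b ^ k < (ωu - w) / (ω - w) := by
    intro k
    rw [Set.mem_Ioo, hiter k]
    constructor
    · rintro ⟨hl, hu⟩
      have hpos2 : 0 < (-b)^k * (ω - w) := by linarith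
      have hpos : 0 < (-b)^k := by
        rcases mul_pos_iff.mp hpos2 with ⟨h, _⟩ | ⟨_, h⟩
        · exact h
        · linarith
      have hev : Even k := by
        by_contra hodd
        have : (-b)^k < 0 := Odd.pow_neg (Nat.not_even_iff_odd.mp hodd) (by linarith)
        linarith
      have heq : (-b)^k = b^k := hev.neg_pow b
      rw [heq] at hl hu
      refine ⟨hev, ?_, ?_⟩
      · rw [div_lt_iff₀ hd]; linarith
      · rw [lt_div_iff₀ hd]; linarith
    · rintro ⟨hev, hl, hu⟩
      rw [hev.neg_pow b]
      rw [div_lt_iff₀ hd] at hl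
      rw [lt_div_iff₀ hd] at hu
      constructor <;> linarith
  -- k₁ is in the set
  have hk₁mem : (tau p q)^[k₁] ω ∈ Set.Ioo ωl ωu := by
    rw [hmem_iff]
    have hev : Even k₁ := by
      have : Even ((k₁ : ℤ)) := ⟨⌊xu⌋ + 1, by rw [hk₁]; ring⟩
      exact Int.even_coe_nat k₁ |>.mp this
    have hcast : (k₁ : ℝ) = 2 * (⌊xu⌋ : ℝ) + 2 := by
      have := congrArg (fun z : ℤ => (z : ℝ)) hk₁
      push_cast at this
      exact this
    refine ⟨hev, ?_, ?_⟩
    · rw [key' k₁ _ hρl]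
      have hceil : (⌈xl⌉ : ℝ) < xl + 1 := Int.ceil_lt_add_one xl
      have hcastle : (k₁ : ℝ) ≤ 2 * (⌈xl⌉ : ℝ) - 2 := by
        have := (Int.cast_le (R := ℝ)).mpr hle
        push_cast at this
        linarith
      have : (k₁ : ℝ) < 2 * xl := by linarith
      calc (k₁ : ℝ) < 2 * xl := this
        _ = Real.logb b ((ωl - w) / (ω - w)) := by rw [hxl_def]; ring
    · rw [key k₁ _ hρu]
      have hfloor : xu - 1 < (⌊xu⌋ : ℝ) := Int.sub_one_lt_floor xu
      have : 2 * xu < (k₁ : ℝ) := by rw [hcast]; linarith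
      calc Real.logb b ((ωu - w) / (ω - w)) = 2 * xu := by rw [hxu_def]; ring
        _ < (k₁ : ℝ) := this
  -- lower bound
  have hlb : ∀ k ∈ {k : ℕ | (tau p q)^[k] ω ∈ Set.Ioo ωl ωu}, k₁ ≤ k := by
    intro k hk
    rw [Set.mem_setOf_eq, hmem_iff] at hk
    obtain ⟨hev, _, hu⟩ := hk
    rw [key k _ hρu] at hu
    -- logb ρu < k, i.e. 2*xu < k
    have h2xu : 2 * xu < (k : ℝ) := by
      rw [hxu_def] at *
      linarith [hu]
    obtain ⟨m, hm⟩ := hev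
    have hm' : k = 2 * m := by omega
    have hxum : xu < (m : ℝ) := by
      rw [hm'] at h2xu
      push_cast at h2xu
      linarith
    have hfl : ⌊xu⌋ < (m : ℤ) := Int.floor_lt.mpr (by exact_mod_cast hxum)
    have : (k₁ : ℤ) ≤ (k : ℤ) := by
      rw [hk₁, hm']
      push_cast
      omega
    exact_mod_cast this
  have hne : {k : ℕ | (tau p q)^[k] ω ∈ Set.Ioo ωl ωu}.Nonempty := ⟨k₁, hk₁mem⟩
  refine ⟨hne, le_antisymm (Nat.sInf_le hk₁mem) (le_csInf hne hlb)⟩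
end

section
/- Suppose p + q > 1 and let ω, ω^l, ω^u be reals with ω* ≤ ω^l < ω^u ≤ 1, 0 ≤ ω ≤ ω^l, and τ(ω) ≤ ω^l. Then τ^k(ω) ∉ (ω^l, ω^u) for every k ∈ ℕ. -/
/-- Suppose p + q > 1 and ω* ≤ ω^l < ω^u ≤ 1, 0 ≤ ω ≤ ω^l, and
τ(ω) ≤ ω^l. Then τ^k(ω) ∉ (ω^l, ω^u) for every k ∈ ℕ. -/
theorem never_hits_oscillating (p q : ℝ) (hp : 0 < p) (hpq : p ≤ q) (hq : q < 1)
    (hsum : 1 < p + q) (ω ωl ωu : ℝ) (h1 : wstar p q ≤ ωl) (h2 : ωl < ωu)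
    (h3 : ωu ≤ 1) (h4 : 0 ≤ ω) (h5 : ω ≤ ωl) (h6 : tau p q ω ≤ ωl) :
    ∀ k : ℕ, (tau p q)^[k] ω ∉ Set.Ioo ωl ωu := by
  have hs : (0:ℝ) < p + q := by linarith
  have h1' : p / (p + q) ≤ ωl := h1
  have h1'' : p ≤ ωl * (p + q) := by
    rw [div_le_iff₀ hs] at h1'; linarith
  have key : ∀ x : ℝ, x ≤ ωl → tau p q (tau p q x) ≤ ωl := by
    intro x hx
    unfold tau
    nlinarith [sq_nonneg (1 - p - q), sq_nonneg (x - ωl)]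
  have main : ∀ k : ℕ, (tau p q)^[k] ω ≤ ωl ∧ (tau p q)^[k+1] ω ≤ ωl := by
    intro k
    induction k with
    | zero => exact ⟨h5, by simpa [tau] using h6⟩
    | succ n ih =>
      refine ⟨ih.2, ?_⟩
      simpa [Function.iterate_succ_apply'] using key _ ih.1
  intro k hk
  exact absurd (main k).1 (not_le.mpr hk.1)
end

section
/- Suppose p + q > 1 and let ω^l, ω^u be reals with ω* ≤ ω^l < ω^u ≤ 1. If τ^k(1−q) ∉ (ω^l, ω^u) for every k ∈ ℕ, then τ^k(ω^u) ∉ (ω^l, ω^u) for every k ∈ ℕ. -/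
lemma tau_iter (p q : ℝ) (h : p + q ≠ 0) (k : ℕ) (ω : ℝ) :
    (tau p q)^[k] ω = wstar p q + (1 - p - q) ^ k * (ω - wstar p q) := by
  induction k with
  | zero => simp
  | succ n ih =>
    rw [Function.iterate_succ_apply', ih, tau, wstar, pow_succ]
    field_simp
    ring

lemma key_real (s a b B : ℝ) (hs0 : 0 < s) (hs1 : s < 1) (hb : 0 ≤ b) (hba : b < a)
    (haB : a ≤ B) (H : ∀ m : ℕ, 1 ≤ m → s ^ m * B ≤ b ∨ a ≤ s ^ m * B) :
    ∀ m : ℕ, 1 ≤ m → s ^ m * a ≤ b := by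
  have ha : 0 < a := lt_of_le_of_lt hb hba
  have hB : 0 < B := lt_of_lt_of_le ha haB
  have hex : ∃ m : ℕ, s ^ m * B < a := by
    obtain ⟨n, hn⟩ := exists_pow_lt_of_lt_one (div_pos ha hB) hs1
    exact ⟨n, by rwa [← lt_div_iff₀ hB]⟩
  classical
  set m0 := Nat.find hex with hm0
  have hlt : s ^ m0 * B < a := Nat.find_spec hex
  have hmin : ∀ m' < m0, a ≤ s ^ m' * B := fun m' hm' =>
    le_of_not_gt (Nat.find_min hex hm')
  have hm0pos : 1 ≤ m0 := by
    by_contra h'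
    have : m0 = 0 := by omega
    rw [this] at hlt
    simp at hlt
    linarith
  have hkey : s ^ m0 * B ≤ b := by
    rcases H m0 hm0pos with h' | h'
    · exact h'
    · linarith
  intro m hm
  by_cases hmm : m0 ≤ m
  · have : s ^ m ≤ s ^ m0 := pow_le_pow_of_le_one hs0.le hs1.le hmm
    have h1 : s ^ m * a ≤ s ^ m * B :=
      mul_le_mul_of_nonneg_left haB (pow_nonneg hs0.le m)
    have h2 : s ^ m * B ≤ s ^ m0 * B := mul_le_mul_of_nonneg_right this hB.le
    linarith
  · push_neg at hmm
    have hprev : a ≤ s ^ (m0 - 1) * B := hmin (m0 - 1) (by omega)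
    have h1 : s ^ m * a ≤ s ^ m * (s ^ (m0 - 1) * B) :=
      mul_le_mul_of_nonneg_left hprev (pow_nonneg hs0.le m)
    have h2 : s ^ m * (s ^ (m0 - 1) * B) = s ^ (m + (m0 - 1)) * B := by
      rw [pow_add]; ring
    have h3 : s ^ (m + (m0 - 1)) ≤ s ^ m0 :=
      pow_le_pow_of_le_one hs0.le hs1.le (by omega)
    have h4 : s ^ (m + (m0 - 1)) * B ≤ s ^ m0 * B :=
      mul_le_mul_of_nonneg_right h3 hB.le
    linarith

/-- Suppose p + q > 1 and ω* ≤ ω^l < ω^u ≤ 1. If τ^k(1−q) ∉ (ω^l, ω^u)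
for every k ∈ ℕ, then τ^k(ω^u) ∉ (ω^l, ω^u) for every k ∈ ℕ. -/
theorem upper_threshold_never_hits (p q : ℝ) (hp : 0 < p) (hpq : p ≤ q) (hq : q < 1)
    (hsum : 1 < p + q) (ωl ωu : ℝ) (h1 : wstar p q ≤ ωl) (h2 : ωl < ωu) (h3 : ωu ≤ 1)
    (hq' : ∀ k : ℕ, (tau p q)^[k] (1 - q) ∉ Set.Ioo ωl ωu) :
    ∀ k : ℕ, (tau p q)^[k] ωu ∉ Set.Ioo ωl ωu := by
  have hpq0 : p + q ≠ 0 := by linarith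
  set w := wstar p q with hw
  set r := 1 - p - q with hr
  have hr0 : r < 0 := by simp [hr]; linarith
  have hr1 : -1 < r := by simp [hr]; linarith
  -- the hypothesis rewritten: τ(1) = 1 - q
  have htau1 : tau p q 1 = 1 - q := by simp [tau]; ring
  have hiter1 : ∀ k : ℕ, (tau p q)^[k] (1 - q) = w + r ^ (k + 1) * (1 - w) := by
    intro k
    rw [← htau1, ← Function.iterate_succ_apply, tau_iter p q hpq0]
  have hs0 : 0 < r ^ 2 := pow_two_pos_of_ne_zero (ne_of_lt hr0)
  have hs1 : r ^ 2 < 1 := by nlinarith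
  set s := r ^ 2 with hs
  have hwu : w < ωu := lt_of_le_of_lt h1 h2
  set a := ωu - w with ha
  set b := ωl - w with hb
  set B := 1 - w with hB
  have hbnn : 0 ≤ b := by simp [hb]; linarith
  have hba : b < a := by simp [ha, hb]; linarith
  have haB : a ≤ B := by simp [ha, hB]; linarith
  -- hypothesis for even powers
  have H : ∀ m : ℕ, 1 ≤ m → s ^ m * B ≤ b ∨ a ≤ s ^ m * B := by
    intro m hm
    have := hq' (2 * m - 1)
    rw [hiter1] at this
    have heq : r ^ (2 * m - 1 + 1) = s ^ m := by
      rw [hs, ← pow_mul]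
      congr 1
      omega
    rw [heq] at this
    simp only [Set.mem_Ioo, not_and, not_lt] at this
    by_cases hcase : ωl < w + s ^ m * B
    · right
      have := this hcase
      simp [ha]; linarith
    · left
      push_neg at hcase
      simp [hb]; linarith
  have hkey := key_real s a b B hs0 hs1 hbnn hba haB H
  intro k
  rw [tau_iter p q hpq0, ← hw, ← hr]
  rcases Nat.even_or_odd k with he | ho
  · rcases Nat.eq_zero_or_pos k with hk0 | hkpos
    · subst hk0
      simp only [pow_zero, one_mul]
      intro hx
      rw [Set.mem_Ioo] at hx
      linarith [hx.2]
    · obtain ⟨m, hm⟩ := he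
      have hm1 : 1 ≤ m := by omega
      have heq : r ^ k = s ^ m := by rw [hs, ← pow_mul]; congr 1; omega
      rw [heq]
      have := hkey m hm1
      have hsm : s ^ m * (ωu - w) ≤ b := by rw [← ha]; exact this
      simp only [Set.mem_Ioo, not_and, not_lt]
      intro hcontra
      exfalso
      have hbb : b = ωl - w := hb
      linarith
  · -- odd k: r^k < 0 so the value is below w ≤ ωl
    obtain ⟨m, hm⟩ := ho
    have hrk : r ^ k < 0 := by
      rw [hm]
      exact Odd.pow_neg ⟨m, by omega⟩ hr0
    simp only [Set.mem_Ioo, not_and, not_lt]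
    intro hcontra
    exfalso
    nlinarith [hrk, hwu]
end

section
/- Suppose p + q < 1. For every x ∈ (0, ω*), one has ( log_{1−p−q}( (x − ω*)/(p − ω*) ) + 1 )·( p − x(p+q) ) − x < 0. -/
/-- Suppose p + q < 1. For every x ∈ (0, ω*),
( log_{1−p−q}( (x − ω*)/(p − ω*) ) + 1 )·( p − x(p+q) ) − x < 0. -/
theorem h1_neg (p q : ℝ) (hp : 0 < p) (hpq : p ≤ q) (hq : q < 1) (hsum : p + q < 1)
    (x : ℝ) (hx : x ∈ Set.Ioo (0 : ℝ) (wstar p q)) :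
    (Real.logb (1 - p - q) ((x - wstar p q) / (p - wstar p q)) + 1) *
      (p - x * (p + q)) - x < 0 := by
  obtain ⟨hx0, hxw⟩ := hx
  have hq0 : 0 < q := lt_of_lt_of_le hp hpq
  set s : ℝ := p + q with hs_def
  have hs : 0 < s := by positivity
  have hb : 0 < 1 - s := by linarith
  have hb1 : 1 - s < 1 := by linarith
  have hw0 : 0 < wstar p q := div_pos hp hs
  set w : ℝ := wstar p q with hw_def
  set r : ℝ := (w - x) / w with hr_def
  have hr0 : 0 < r := div_pos (by linarith) hw0
  have hr1 : r < 1 := by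
    rw [hr_def, div_lt_one hw0]; linarith
  have hwne : w ≠ 0 := ne_of_gt hw0
  have hsne : s ≠ 0 := ne_of_gt hs
  have hws : w = p / s := rfl
  -- rewrite the logb argument
  have harg : (x - w) / (p - w) = r / (1 - s) := by
    have hpw : p - w = -(w * (1 - s)) := by
      rw [hws]; field_simp; ring
    rw [hpw, hr_def]
    field_simp
    ring
  have hlog : Real.logb (1 - p - q) ((x - w) / (p - w)) + 1
      = Real.log r / Real.log (1 - s) := by
    have h1 : (1 : ℝ) - p - q = 1 - s := by rw [hs_def]; ring
    rw [harg, h1, Real.logb, Real.log_div (ne_of_gt hr0) (ne_of_gt hb)]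
    have hlb : Real.log (1 - s) ≠ 0 := ne_of_lt (Real.log_neg hb hb1)
    field_simp
    ring
  rw [hlog]
  -- key facts
  have hlogb_neg : Real.log (1 - s) < 0 := Real.log_neg hb hb1
  have hlogb_le : Real.log (1 - s) ≤ -s := by
    have := Real.log_le_sub_one_of_pos hb
    linarith
  have hlogr_neg : Real.log r < 0 := Real.log_neg hr0 hr1
  -- p - x*s = s*w*r
  have hpxs : p - x * s = s * w * r := by
    rw [hr_def, hws]; field_simp
  have hpxs_pos : 0 < p - x * s := by
    rw [hpxs]; positivity
  -- x = w*(1-r)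
  have hxe : x = w * (1 - r) := by
    rw [hr_def]; field_simp; ring
  -- inequality A
  have hA : Real.log r / Real.log (1 - s) ≤ -Real.log r / s := by
    have h1 : Real.log r / Real.log (1 - s) = -Real.log r / -Real.log (1 - s) := by
      rw [neg_div_neg_eq]
    rw [h1]
    apply div_le_div_of_nonneg_left (by linarith) hs (by linarith)
  -- inequality B : r * (-log r) < 1 - r
  have hB : r * (-Real.log r) < 1 - r := by
    have h1 : Real.log (1 / r) < 1 / r - 1 :=
      Real.log_lt_sub_one_of_pos (by positivity) (by
        intro h
        have : r = 1 := by
          field_simp at h; linarith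
        linarith)
    rw [Real.log_div one_ne_zero (ne_of_gt hr0), Real.log_one] at h1
    have h2 : r * (0 - Real.log r) < r * (1 / r - 1) :=
      mul_lt_mul_of_pos_left (by linarith) hr0
    have h3 : r * (1 / r - 1) = 1 - r := by field_simp
    linarith [h2, h3.symm ▸ h2]
  have hmain : Real.log r / Real.log (1 - s) * (p - x * s) < x := calc
    Real.log r / Real.log (1 - s) * (p - x * s)
      ≤ -Real.log r / s * (p - x * s) :=
        mul_le_mul_of_nonneg_right hA (le_of_lt hpxs_pos)
    _ = w * (r * (-Real.log r)) := by rw [hpxs]; field_simp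
    _ < w * (1 - r) := mul_lt_mul_of_pos_left hB hw0
    _ = x := hxe.symm
  linarith
end

section
/- Suppose p + q < 1. For every x ∈ (ω*, 1), one has ( log_{1−p−q}( (x − ω*)/(1 − q − ω*) ) + 1 )·( x(p+q) − p ) − (1 − x) < 0. -/
/-- Suppose p + q < 1. For every x ∈ (ω*, 1),
( log_{1−p−q}( (x − ω*)/(1 − q − ω*) ) + 1 )·( x(p+q) − p ) − (1 − x) < 0. -/
theorem h2_neg (p q : ℝ) (hp : 0 < p) (hpq : p ≤ q) (hq : q < 1) (hsum : p + q < 1)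
    (x : ℝ) (hx : x ∈ Set.Ioo (wstar p q) (1 : ℝ)) :
    (Real.logb (1 - p - q) ((x - wstar p q) / (1 - q - wstar p q)) + 1) *
      (x * (p + q) - p) - (1 - x) < 0 := by
  obtain ⟨hx1, hx2⟩ := hx
  have hq0 : 0 < q := lt_of_lt_of_le hp hpq
  have hs : 0 < p + q := by linarith
  have hb : 0 < 1 - (p + q) := by linarith
  have hb1 : 1 - (p + q) < 1 := by linarith
  rw [wstar, div_lt_iff₀ hs] at hx1
  have hu : 0 < x * (p + q) - p := by linarith
  set u := x * (p + q) - p with hu_def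
  have huq : u < q := by nlinarith
  have key : (x - wstar p q) / (1 - q - wstar p q) = u / (q * (1 - (p + q))) := by
    rw [wstar]
    have hd : (1 : ℝ) - q - p / (p + q) = q * (1 - (p + q)) / (p + q) := by
      field_simp; ring
    rw [hd, div_eq_div_iff (by positivity) (by positivity)]
    field_simp
    exact hu_def.symm
  rw [key]
  have hlq : Real.log (1 - (p + q)) < 0 := Real.log_neg hb hb1
  have hlqne : Real.log (1 - (p + q)) ≠ 0 := ne_of_lt hlq
  have hlog : Real.logb (1 - p - q) (u / (q * (1 - (p + q)))) + 1 =
      Real.log (u / q) / Real.log (1 - (p + q)) := by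
    rw [show (1 : ℝ) - p - q = 1 - (p + q) by ring, Real.logb,
      show u / (q * (1 - (p + q))) = (u / q) / (1 - (p + q)) by rw [div_div],
      Real.log_div (by positivity) (ne_of_gt hb)]
    field_simp
    ring
  rw [hlog]
  have hA : Real.log (u / q) < 0 :=
    Real.log_neg (by positivity) (by rw [div_lt_one hq0]; exact huq)
  have hAu : (-Real.log (u / q)) * u < q - u := by
    have h1 : Real.log (q / u) < q / u - 1 :=
      Real.log_lt_sub_one_of_pos (by positivity) (by
        intro h
        rw [div_eq_one_iff_eq (ne_of_gt hu)] at h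
        linarith)
    have h2 : Real.log (q / u) = -Real.log (u / q) := by
      rw [Real.log_div (ne_of_gt hq0) (ne_of_gt hu),
        Real.log_div (ne_of_gt hu) (ne_of_gt hq0)]
      ring
    rw [h2] at h1
    have := mul_lt_mul_of_pos_right h1 hu
    calc (-Real.log (u / q)) * u < (q / u - 1) * u := this
      _ = q - u := by field_simp
  have hB : p + q < -Real.log (1 - (p + q)) := by
    have := Real.log_lt_sub_one_of_pos hb (ne_of_lt hb1)
    linarith
  have hBpos : 0 < -Real.log (1 - (p + q)) := lt_trans hs hB
  have h1x : 1 - x = (q - u) / (p + q) := by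
    field_simp
    ring
  rw [h1x, sub_neg]
  rw [show Real.log (u / q) / Real.log (1 - (p + q)) =
      (-Real.log (u / q)) / (-Real.log (1 - (p + q))) by rw [neg_div_neg_eq]]
  rw [div_mul_eq_mul_div, div_lt_div_iff₀ hBpos hs]
  have hApos : 0 < -Real.log (u / q) := by linarith
  nlinarith [mul_lt_mul_of_pos_right hAu hs,
    mul_lt_mul_of_pos_left hB (show (0:ℝ) < q - u by linarith)]
end
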